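/- The Zariski closure in ℂ⁴ × ℂ of the image of the map (t, λ) ↦ (1, t, λt², λ²t³, λ) from ℂ* × ℂ equals the Zariski closure of the image of (t, λ) ↦ (λ, t, t², t³, λ); both are cut out (as affine cones over ℙ³ × ℂ) by the equations x₀x₂ − ηx₁² = 0, x₁x₃ − x₂² = 0, x₀x₃ − ηx₁x₂ = 0. -/

import Mathlib

/-!
Write `V` for the common zero set of `x₀x₂ − ηx₁²`, `x₁x₃ − x₂²`, `x₀x₃ − ηx₁x₂`. Both
parametrized sets lie in `V`, and both contain the locus of points of `V` with `x₀x₁x₂ ≠ 0`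
(one solves for `c`, `t`, `λ` directly). This locus is dense in `V` for the classical topology:
every point of `V` is a value of `(s, u, r) ↦ (rs³, s², su, u², ru)` or of
`(c, t, λ) ↦ (c, ct, cλt², cλ²t³, λ)`, and both maps send the dense set of parameters with no
zero coordinate into the locus. Since polynomials are continuous, the Zariski closure of a set
contains its classical closure, so both Zariski closures are squeezed to `V`.
-/

open MvPolynomial Set

section ZariskiClosure

variable {σ k : Type*} [Field k] [TopologicalSpace k] [IsTopologicalRing k] [T2Space k]

theorem closure_subset_zeroLocus_vanishingIdeal (S : Set (σ → k)) :
    closure S ⊆ zeroLocus k (vanishingIdeal k S) := by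
  refine closure_minimal (zeroLocus_vanishingIdeal_le S) ?_
  simp only [zeroLocus, ofPred_forall]
  exact isClosed_biInter fun p _ => isClosed_eq (continuous_eval p) continuous_const

theorem zeroLocus_vanishingIdeal_eq_of_subset_closure {S : Set (σ → k)}
    {I : Ideal (MvPolynomial σ k)} (hS : S ⊆ zeroLocus k I) (hI : zeroLocus k I ⊆ closure S) :
    zeroLocus k (vanishingIdeal k S) = zeroLocus k I :=
  (zeroLocus_anti_mono (le_zeroLocus_iff_le_vanishingIdeal.mp hS)).antisymm
    (hI.trans (closure_subset_zeroLocus_vanishingIdeal S))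

end ZariskiClosure

noncomputable def degenerationIdeal : Ideal (MvPolynomial (Fin 5) ℂ) :=
  Ideal.span {X 0 * X 2 - X 4 * X 1 ^ 2, X 1 * X 3 - X 2 ^ 2, X 0 * X 3 - X 4 * (X 1 * X 2)}

theorem mem_zeroLocus_degenerationIdeal {x : Fin 5 → ℂ} :
    x ∈ zeroLocus ℂ degenerationIdeal ↔ x 0 * x 2 - x 4 * x 1 ^ 2 = 0 ∧
      x 1 * x 3 - x 2 ^ 2 = 0 ∧ x 0 * x 3 - x 4 * (x 1 * x 2) = 0 := by
  simp [degenerationIdeal, zeroLocus_span]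

def coneParam (p : ℂ × ℂ × ℂ) : Fin 5 → ℂ :=
  ![p.2.2 * p.1 ^ 3, p.1 ^ 2, p.1 * p.2.1, p.2.1 ^ 2, p.2.2 * p.2.1]

def familyParam (p : ℂ × ℂ × ℂ) : Fin 5 → ℂ :=
  ![p.1, p.1 * p.2.1, p.1 * p.2.2 * p.2.1 ^ 2, p.1 * p.2.2 ^ 2 * p.2.1 ^ 3, p.2.2]

theorem continuous_coneParam : Continuous coneParam := by
  unfold coneParam
  fun_prop

theorem continuous_familyParam : Continuous familyParam := by
  unfold familyParam
  fun_prop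

theorem coneParam_mem_zeroLocus (p : ℂ × ℂ × ℂ) :
    coneParam p ∈ zeroLocus ℂ degenerationIdeal := by
  rw [mem_zeroLocus_degenerationIdeal]
  simp only [coneParam, Fin.isValue, Matrix.cons_val]
  refine ⟨?_, ?_, ?_⟩ <;> ring

theorem familyParam_mem_zeroLocus (p : ℂ × ℂ × ℂ) :
    familyParam p ∈ zeroLocus ℂ degenerationIdeal := by
  rw [mem_zeroLocus_degenerationIdeal]
  simp only [familyParam, Fin.isValue, Matrix.cons_val]
  refine ⟨?_, ?_, ?_⟩ <;> ring

theorem zeroLocus_subset_range_coneParam_union_range_familyParam :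
    zeroLocus ℂ degenerationIdeal ⊆ range coneParam ∪ range familyParam := by
  intro x hx
  obtain ⟨e02, e13, e03⟩ := mem_zeroLocus_degenerationIdeal.mp hx
  by_cases h1 : x 1 = 0
  · have h2 : x 2 = 0 := pow_eq_zero_iff two_ne_zero |>.mp (by linear_combination x 3 * h1 - e13)
    by_cases h3 : x 3 = 0
    · refine Or.inr ⟨(x 0, 0, x 4), ?_⟩
      ext i
      fin_cases i <;> simp [familyParam, h1, h2, h3]
    · have h0 : x 0 = 0 :=
        (mul_eq_zero.mp (by linear_combination e03 + x 4 * x 2 * h1)).resolve_right h3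
      obtain ⟨u, hu⟩ := IsAlgClosed.exists_pow_nat_eq (x 3) two_pos
      have hu0 : u ≠ 0 := by rintro rfl; simp_all
      refine Or.inl ⟨(0, u, x 4 / u), ?_⟩
      ext i
      fin_cases i <;> simp [coneParam, h0, h1, h2, hu, hu0]
  · obtain ⟨s, hs⟩ := IsAlgClosed.exists_pow_nat_eq (x 1) two_pos
    have hs0 : s ≠ 0 := by rintro rfl; simp_all
    refine Or.inl ⟨(s, x 2 / s, x 0 / s ^ 3), ?_⟩
    ext i
    fin_cases i <;> simp only [coneParam, hs, Fin.isValue, Fin.zero_eta, Fin.mk_one,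
      Fin.reduceFinMk, Matrix.cons_val_zero, Matrix.cons_val_one, Matrix.cons_val] <;> field_simp
    · linear_combination -e13 - x 3 * hs
    · linear_combination e02 - x 4 * (s ^ 2 + x 1) * hs

def genericLocus : Set (Fin 5 → ℂ) :=
  {x ∈ zeroLocus ℂ degenerationIdeal | x 0 ≠ 0 ∧ x 1 ≠ 0 ∧ x 2 ≠ 0}

theorem zeroLocus_subset_closure_genericLocus :
    zeroLocus ℂ degenerationIdeal ⊆ closure genericLocus := by
  let D : Set (ℂ × ℂ × ℂ) := {0}ᶜ ×ˢ {0}ᶜ ×ˢ {0}ᶜ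
  have hD : Dense D :=
    (dense_compl_singleton 0).prod ((dense_compl_singleton 0).prod (dense_compl_singleton 0))
  have range_subset {f : ℂ × ℂ × ℂ → Fin 5 → ℂ} (hf : Continuous f)
      (hfD : MapsTo f D genericLocus) : range f ⊆ closure genericLocus :=
    (hf.range_subset_closure_image_dense hD).trans (closure_mono hfD.image_subset)
  refine zeroLocus_subset_range_coneParam_union_range_familyParam.trans
    (union_subset (range_subset continuous_coneParam ?_) (range_subset continuous_familyParam ?_))
  · rintro ⟨s, u, r⟩ ⟨hs, hu, hr⟩
    exact ⟨coneParam_mem_zeroLocus _, by simp_all [coneParam]⟩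
  · rintro ⟨c, t, lam⟩ ⟨hc, ht, hlam⟩
    exact ⟨familyParam_mem_zeroLocus _, by simp_all [familyParam]⟩

def imageF : Set (Fin 5 → ℂ) :=
  {p | ∃ c t lam : ℂ, c ≠ 0 ∧ t ≠ 0 ∧ p = ![c, c * t, c * lam * t ^ 2, c * lam ^ 2 * t ^ 3, lam]}

def imageG : Set (Fin 5 → ℂ) :=
  {p | ∃ c t lam : ℂ, c ≠ 0 ∧ t ≠ 0 ∧ p = ![c * lam, c * t, c * t ^ 2, c * t ^ 3, lam]}

theorem imageF_subset_zeroLocus : imageF ⊆ zeroLocus ℂ degenerationIdeal := by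
  rintro _ ⟨c, t, lam, -, -, rfl⟩
  exact familyParam_mem_zeroLocus (c, t, lam)

theorem imageG_subset_zeroLocus : imageG ⊆ zeroLocus ℂ degenerationIdeal := by
  rintro _ ⟨c, t, lam, -, -, rfl⟩
  rw [mem_zeroLocus_degenerationIdeal]
  simp only [Fin.isValue, Matrix.cons_val]
  refine ⟨?_, ?_, ?_⟩ <;> ring

theorem genericLocus_subset_imageF : genericLocus ⊆ imageF := by
  rintro x ⟨hx, h0, h1, -⟩
  obtain ⟨e02, -, e03⟩ := mem_zeroLocus_degenerationIdeal.mp hx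
  refine ⟨x 0, x 1 / x 0, x 4, h0, div_ne_zero h1 h0, ?_⟩
  ext i
  fin_cases i <;> simp only [Fin.isValue, Fin.zero_eta, Fin.mk_one, Fin.reduceFinMk,
    Matrix.cons_val_zero, Matrix.cons_val_one, Matrix.cons_val] <;> field_simp
  · linear_combination e02
  · linear_combination x 0 * e03 + x 4 * x 1 * e02

theorem genericLocus_subset_imageG : genericLocus ⊆ imageG := by
  rintro x ⟨hx, -, h1, h2⟩
  obtain ⟨e02, e13, -⟩ := mem_zeroLocus_degenerationIdeal.mp hx
  refine ⟨x 1 ^ 2 / x 2, x 2 / x 1, x 4, by positivity, div_ne_zero h2 h1, ?_⟩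
  ext i
  fin_cases i <;> simp only [Fin.isValue, Fin.zero_eta, Fin.mk_one, Fin.reduceFinMk,
    Matrix.cons_val_zero, Matrix.cons_val_one, Matrix.cons_val] <;> field_simp
  · linear_combination e02
  · linear_combination e13

/-- The Zariski closures (in ℂ⁴ × ℂ, taken as affine cones over ℙ³ × ℂ) of the
images of the two parametrizations of the degenerating twisted cubic coincide,
and are cut out by x₀x₂ − ηx₁², x₁x₃ − x₂², x₀x₃ − ηx₁x₂. -/
theorem stmt_15 (SF SG : Set (Fin 5 → ℂ))
    (hSF : SF = {p | ∃ c t lam : ℂ, c ≠ 0 ∧ t ≠ 0 ∧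
        p = ![c, c * t, c * lam * t ^ 2, c * lam ^ 2 * t ^ 3, lam]})
    (hSG : SG = {p | ∃ c t lam : ℂ, c ≠ 0 ∧ t ≠ 0 ∧
        p = ![c * lam, c * t, c * t ^ 2, c * t ^ 3, lam]})
    (Zcl : Set (Fin 5 → ℂ) → Set (Fin 5 → ℂ))
    (hZcl : ∀ S, Zcl S = {x | ∀ f : MvPolynomial (Fin 5) ℂ,
        (∀ y ∈ S, MvPolynomial.eval y f = 0) → MvPolynomial.eval x f = 0}) :
    Zcl SF = Zcl SG ∧
      Zcl SF = {x : Fin 5 → ℂ | x 0 * x 2 - x 4 * x 1 ^ 2 = 0 ∧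
        x 1 * x 3 - x 2 ^ 2 = 0 ∧ x 0 * x 3 - x 4 * (x 1 * x 2) = 0} := by
  have hZcl' (S : Set (Fin 5 → ℂ)) : Zcl S = zeroLocus ℂ (vanishingIdeal ℂ S) := by
    ext x
    simp [hZcl]
  have hF : Zcl SF = zeroLocus ℂ degenerationIdeal := by
    rw [hZcl', hSF]
    exact zeroLocus_vanishingIdeal_eq_of_subset_closure imageF_subset_zeroLocus
      (zeroLocus_subset_closure_genericLocus.trans (closure_mono genericLocus_subset_imageF))
  have hG : Zcl SG = zeroLocus ℂ degenerationIdeal := by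
    rw [hZcl', hSG]
    exact zeroLocus_vanishingIdeal_eq_of_subset_closure imageG_subset_zeroLocus
      (zeroLocus_subset_closure_genericLocus.trans (closure_mono genericLocus_subset_imageG))
  refine ⟨hF.trans hG.symm, hF.trans ?_⟩
  ext x
  exact mem_zeroLocus_degenerationIdeal
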